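/- arXiv:1808.08645 — 5 statements merged into one kernel-verified Lean document; each statement's English description precedes it below -/
import Mathlib

section
/- Let d ≥ 0, N, M ≥ 0, and let α, β : Fin (d+1) → ℕ be multi-indices with ∑_i α_i = N and ∑_i β_i = M. Then, with C^N_α = N!/(α_0!⋯α_d!) denoting the multinomial coefficient, one has the identity of natural numbers: Nat.choose (N+M) N · C^N_α · C^M_β = (∏_{i=0}^{d} Nat.choose (α_i + β_i) (α_i)) · C^{N+M}_{α+β}. -/
/-!
Multiplied by `∏ i, α i ! * ∏ i, β i !`, both sides become `(N + M)!`: on the left the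
multinomials absorb the factorials, leaving `(N + M choose N) * N! * M!`; on the right each
binomial turns `α i ! * β i !` into `(α i + β i)!`, which the multinomial absorbs.
-/

open Finset

namespace Nat

variable {ι : Type*} (s : Finset ι) (f g : ι → ℕ)

theorem choose_mul_multinomial_mul_multinomial_mul_prod_factorial :
    (∑ i ∈ s, f i + ∑ i ∈ s, g i).choose (∑ i ∈ s, f i) * multinomial s f * multinomial s g *
        ((∏ i ∈ s, (f i)!) * ∏ i ∈ s, (g i)!) =
      (∑ i ∈ s, f i + ∑ i ∈ s, g i)! := by
  calc _ = (∑ i ∈ s, f i + ∑ i ∈ s, g i).choose (∑ i ∈ s, f i) *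
          ((∏ i ∈ s, (f i)!) * multinomial s f) * ((∏ i ∈ s, (g i)!) * multinomial s g) := by
        ring
    _ = _ := by
        rw [multinomial_spec, multinomial_spec, choose_symm_add,
          add_choose_mul_factorial_mul_factorial]

theorem prod_choose_mul_multinomial_add_mul_prod_factorial :
    (∏ i ∈ s, (f i + g i).choose (f i)) * multinomial s (f + g) *
        ((∏ i ∈ s, (f i)!) * ∏ i ∈ s, (g i)!) =
      (∑ i ∈ s, f i + ∑ i ∈ s, g i)! := by
  have prod_factorial_add : ∏ i ∈ s, ((f + g) i)! =
      (∏ i ∈ s, (f i + g i).choose (f i)) * ((∏ i ∈ s, (f i)!) * ∏ i ∈ s, (g i)!) := by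
    rw [← prod_mul_distrib, ← prod_mul_distrib]
    refine prod_congr rfl fun i _ => ?_
    rw [Pi.add_apply, ← mul_assoc, choose_symm_add, add_choose_mul_factorial_mul_factorial]
  calc _ = (∏ i ∈ s, ((f + g) i)!) * multinomial s (f + g) := by
        rw [prod_factorial_add]; ring
    _ = _ := by rw [multinomial_spec, ← sum_add_distrib]; rfl

theorem choose_sum_mul_multinomial_mul_multinomial :
    (∑ i ∈ s, f i + ∑ i ∈ s, g i).choose (∑ i ∈ s, f i) * multinomial s f * multinomial s g =
      (∏ i ∈ s, (f i + g i).choose (f i)) * multinomial s (f + g) := by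
  have prod_factorial_pos : 0 < (∏ i ∈ s, (f i)!) * ∏ i ∈ s, (g i)! := by positivity
  refine Nat.eq_of_mul_eq_mul_right prod_factorial_pos ?_
  rw [choose_mul_multinomial_mul_multinomial_mul_prod_factorial,
    prod_choose_mul_multinomial_add_mul_prod_factorial]

end Nat

/-- For multi-indices `α, β : Fin (d+1) → ℕ` with `∑ α = N` and `∑ β = M`,
`(N+M choose N) ⬝ C^N_α ⬝ C^M_β = (∏ i, (α i + β i choose α i)) ⬝ C^{N+M}_{α+β}`,
where `C^N_α` is the multinomial coefficient. -/
theorem multinomial_product_identity (d N M : ℕ) (α β : Fin (d + 1) → ℕ)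
    (hα : ∑ i, α i = N) (hβ : ∑ i, β i = M) :
    Nat.choose (N + M) N * Nat.multinomial Finset.univ α * Nat.multinomial Finset.univ β =
      (∏ i, Nat.choose (α i + β i) (α i)) * Nat.multinomial Finset.univ (α + β) := by
  subst hα hβ
  exact Nat.choose_sum_mul_multinomial_mul_multinomial univ α β
end

section
/- Let d ≥ 1, N, M ≥ 0, and let a_α ∈ ℚ (for multi-indices α of order N) and b_β ∈ ℚ (for multi-indices β of order M) be arbitrary coefficients. Set f = ∑_{|α|=N} a_α B^N_α and g = ∑_{|β|=M} b_β B^M_β. Then f·g = ∑_{|γ|=N+M} c_γ B^{N+M}_γ, where for each multi-index γ of order N+M, c_γ = ∑_{|β|=M, β ≤ γ componentwise} a_{γ−β} · b_β · (∏_{i=0}^{d} Nat.choose (γ_i) (β_i)) / Nat.choose (N+M) N. -/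
/-!
Bernstein polynomials multiply like monomials up to normalisation:
`B_α B_β = (C_α C_β / C_{α+β}) B_{α+β}`, and writing the multinomial coefficients in factorials
gives `C_α C_β / C_{α+β} = ∏ i, (α_i + β_i choose β_i) / (N + M choose N)` when `|α| = N`, `|β| = M`.
Grouping the terms of `f * g` by `γ = α + β`, i.e. `α = γ - β` with `β ≤ γ`, yields `c_γ`.
-/

/-- Multi-indices of dimension `d+1` and order `N`. -/
abbrev MIdx (d N : ℕ) := {α : Fin (d + 1) → ℕ // ∑ i, α i = N}

instance (d N : ℕ) : Fintype (MIdx d N) :=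
  Fintype.subtype (Finset.Nat.antidiagonalTuple (d + 1) N) fun _ =>
    Finset.Nat.mem_antidiagonalTuple

/-- The Bernstein polynomial `B^N_α = C^N_α ∏ i, λ_i ^ α i` (with `N = ∑ i, α i`),
as a multivariate polynomial in the barycentric variables `λ_0, …, λ_d` over `ℚ`. -/
noncomputable def Bern (d : ℕ) (α : Fin (d + 1) → ℕ) : MvPolynomial (Fin (d + 1)) ℚ :=
  MvPolynomial.C (Nat.multinomial Finset.univ α : ℚ) * ∏ i, MvPolynomial.X i ^ α i

open Finset Nat

lemma Nat.cast_multinomial {ι K : Type*} [Field K] [CharZero K] (s : Finset ι) (f : ι → ℕ) :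
    (Nat.multinomial s f : K) = (∑ i ∈ s, f i)! / ∏ i ∈ s, ((f i)! : K) := by
  rw [eq_div_iff (prod_ne_zero_iff.2 fun i _ => Nat.cast_ne_zero.2 (Nat.factorial_ne_zero _)),
    mul_comm]
  exact_mod_cast Nat.multinomial_spec s f

lemma Nat.multinomial_mul_multinomial_div_multinomial_add {ι K : Type*} [Field K] [CharZero K]
    (s : Finset ι) (α β : ι → ℕ) :
    (Nat.multinomial s α * Nat.multinomial s β : K) / Nat.multinomial s (α + β) =
      (∏ i ∈ s, ((α i + β i).choose (β i) : K)) /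
        (∑ i ∈ s, α i + ∑ i ∈ s, β i).choose (∑ i ∈ s, α i) := by
  simp only [Nat.cast_multinomial, Pi.add_apply, sum_add_distrib, Nat.cast_add_choose]
  simp only [add_comm (α _), Nat.cast_add_choose, prod_div_distrib, prod_mul_distrib]
  field_simp

lemma Bern_mul (d : ℕ) (α β : Fin (d + 1) → ℕ) :
    Bern d α * Bern d β =
      ((∏ i, ((α i + β i).choose (β i) : ℚ)) / (∑ i, α i + ∑ i, β i).choose (∑ i, α i)) •
        Bern d (α + β) := by
  have hmonomial : (∏ i, MvPolynomial.X (R := ℚ) i ^ α i) * ∏ i, MvPolynomial.X i ^ β i =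
      ∏ i, MvPolynomial.X i ^ (α + β) i := by
    simp only [← prod_mul_distrib, Pi.add_apply, pow_add]
  rw [← Nat.multinomial_mul_multinomial_div_multinomial_add, Bern, Bern, Bern,
    MvPolynomial.smul_eq_C_mul, mul_mul_mul_comm, hmonomial, ← mul_assoc, ← MvPolynomial.C_mul,
    ← MvPolynomial.C_mul]
  congr 2
  have : (Nat.multinomial univ (α + β) : ℚ) ≠ 0 :=
    Nat.cast_ne_zero.2 (Nat.multinomial_pos _ _).ne'
  field_simp

lemma sum_MIdx_add_eq_sum_ite_le {X : Type*} [AddCommMonoid X] {d N M : ℕ} (β : MIdx d M)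
    (g : (Fin (d + 1) → ℕ) → X) :
    ∑ α : MIdx d N, g (α.1 + β.1) =
      ∑ γ : MIdx d (N + M), if ∀ i, β.1 i ≤ γ.1 i then g γ else 0 := by
  rw [← sum_filter]
  refine sum_bij (fun α _ => ⟨α.1 + β.1, by simp [sum_add_distrib, α.2, β.2]⟩)
    (fun α _ => mem_filter.2 ⟨mem_univ _, fun i => Nat.le_add_left _ _⟩)
    (fun α _ α' _ h => Subtype.ext (add_right_cancel (congrArg Subtype.val h))) ?_
    (fun _ _ => rfl)
  intro γ hγ
  have hle := (mem_filter.1 hγ).2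
  refine ⟨⟨γ.1 - β.1, ?_⟩, mem_univ _, Subtype.ext (funext fun i => Nat.sub_add_cancel (hle i))⟩
  have := sum_tsub_distrib univ fun i _ => hle i
  simp only [Pi.sub_apply, this, γ.2, β.2, Nat.add_sub_cancel]

theorem bernstein_mul_coeffs_general (d N M : ℕ)
    (a b : (Fin (d + 1) → ℕ) → ℚ) :
    (∑ α : MIdx d N, a α.1 • Bern d α.1) * (∑ β : MIdx d M, b β.1 • Bern d β.1) =
      ∑ γ : MIdx d (N + M),
        (∑ β : MIdx d M,
            if ∀ i, β.1 i ≤ γ.1 i then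
              a (γ.1 - β.1) * b β.1 * ((∏ i, Nat.choose (γ.1 i) (β.1 i) : ℕ) : ℚ) /
                (Nat.choose (N + M) N : ℚ)
            else 0) • Bern d γ.1 := by
  simp only [sum_mul_sum, sum_smul, ite_smul, zero_smul]
  rw [sum_comm, sum_comm (s := univ (α := MIdx d (N + M)))]
  refine sum_congr rfl fun β _ => ?_
  rw [← sum_MIdx_add_eq_sum_ite_le β fun γ =>
    (a (γ - β.1) * b β.1 * ((∏ i, (γ i).choose (β.1 i) : ℕ) : ℚ) / ((N + M).choose N : ℚ)) •
      Bern d γ]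
  refine sum_congr rfl fun α _ => ?_
  rw [smul_mul_smul_comm, Bern_mul, smul_smul, α.2, β.2, add_tsub_cancel_right]
  congr 1
  simp only [Pi.add_apply, Nat.cast_prod]
  ring

/-- If `f = ∑_{|α|=N} a_α B^N_α` and `g = ∑_{|β|=M} b_β B^M_β`, then
`f ⬝ g = ∑_{|γ|=N+M} c_γ B^{N+M}_γ` with
`c_γ = ∑_{|β|=M, β ≤ γ} a_{γ-β} b_β (∏ i, (γ i choose β i)) / (N+M choose N)`. -/
theorem bernstein_mul_coeffs (d N M : ℕ) (hd : 1 ≤ d)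
    (a b : (Fin (d + 1) → ℕ) → ℚ) :
    (∑ α : MIdx d N, a α.1 • Bern d α.1) * (∑ β : MIdx d M, b β.1 • Bern d β.1) =
      ∑ γ : MIdx d (N + M),
        (∑ β : MIdx d M,
            if ∀ i, β.1 i ≤ γ.1 i then
              a (γ.1 - β.1) * b β.1 * ((∏ i, Nat.choose (γ.1 i) (β.1 i) : ℕ) : ℚ) /
                (Nat.choose (N + M) N : ℚ)
            else 0) • Bern d γ.1 :=
  bernstein_mul_coeffs_general d N M a b
end

section
/- Let d ≥ 1, N ≥ 0, let a_α ∈ ℚ (for multi-indices α of order N) be arbitrary coefficients, and let b_0,…,b_d ∈ ℚ. Set f = ∑_{|α|=N} a_α B^N_α and g = ∑_{j=0}^{d} b_j B^1_{e_j}. Then f·g = ∑_{|γ|=N+1} c_γ B^{N+1}_γ, where for each multi-index γ of order N+1, c_γ = ∑_{j : γ_j ≥ 1} a_{γ−e_j} · b_j · γ_j/(N+1). -/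
/-- The multi-index `e_j` with `1` in position `j` and `0` elsewhere. -/
def eIdx (d : ℕ) (j : Fin (d + 1)) : Fin (d + 1) → ℕ := fun k => if k = j then 1 else 0

/-! Since `B^1_{e_j} = λ_j`, everything reduces to the degree-raising identity
`B^N_α · λ_j = (α_j + 1)/(N + 1) · B^{N+1}_{α+e_j}`, i.e. to
`(α_j + 1) · C^{N+1}_{α+e_j} = (N + 1) · C^N_α`, which follows from splitting off the `j`-th
factor of the multinomial coefficient. The coefficient formula is then the reindexing
`γ = α + e_j`, a bijection onto the multi-indices of order `N + 1` with `γ_j ≥ 1`. -/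

open Finset MvPolynomial

theorem Nat.succ_mul_multinomial_add_single {ι : Type*} [DecidableEq ι] {s : Finset ι} {j : ι}
    (hj : j ∈ s) (f : ι → ℕ) :
    (f j + 1) * Nat.multinomial s (f + Pi.single j 1) =
      (∑ i ∈ s, f i + 1) * Nat.multinomial s f := by
  obtain ⟨t, hjt, rfl⟩ : ∃ t, j ∉ t ∧ s = insert j t :=
    ⟨s.erase j, notMem_erase j s, (insert_erase hj).symm⟩
  have hoff : ∀ i ∈ t, (f + Pi.single j 1 : ι → ℕ) i = f i := fun i hi => by
    simp [ne_of_mem_of_not_mem hi hjt]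
  rw [Nat.multinomial_insert hjt, Nat.multinomial_insert hjt, Nat.multinomial_congr hoff,
    sum_insert hjt, sum_congr rfl hoff]
  simp only [Pi.add_apply, Pi.single_eq_same]
  rw [← mul_assoc (_ + _ + 1), Nat.add_one_mul_choose_eq, add_right_comm]
  ring

section MultiIndex

variable {d : ℕ}

lemma eIdx_eq_single (j : Fin (d + 1)) : eIdx d j = Pi.single j 1 := by
  ext k
  simp [eIdx, Pi.single_apply]

lemma sum_add_eIdx (α : Fin (d + 1) → ℕ) (j : Fin (d + 1)) :
    ∑ i, (α + eIdx d j) i = ∑ i, α i + 1 := by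
  simp [sum_add_distrib, eIdx]

lemma eIdx_le_iff {α : Fin (d + 1) → ℕ} {j : Fin (d + 1)} : eIdx d j ≤ α ↔ 1 ≤ α j := by
  refine ⟨fun h => by simpa [eIdx] using h j, fun h k => ?_⟩
  by_cases hk : k = j <;> simp [eIdx, hk, h]

lemma sum_sub_eIdx_add_one {α : Fin (d + 1) → ℕ} {j : Fin (d + 1)} (h : 1 ≤ α j) :
    ∑ i, (α - eIdx d j) i + 1 = ∑ i, α i := by
  rw [← sum_add_eIdx, tsub_add_cancel_of_le (eIdx_le_iff.2 h)]

lemma sum_mIdx_succ_ite_sub_eIdx {N : ℕ} {M : Type*} [AddCommMonoid M] (j : Fin (d + 1))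
    (g : (Fin (d + 1) → ℕ) → M) :
    ∑ γ : MIdx d (N + 1), (if 1 ≤ γ.1 j then g (γ.1 - eIdx d j) else 0) =
      ∑ α : MIdx d N, g α.1 := by
  rw [← sum_filter]
  symm
  refine sum_bij' (fun α _ => ⟨α.1 + eIdx d j, by rw [sum_add_eIdx, α.2]⟩)
    (fun γ hγ => ⟨γ.1 - eIdx d j, ?_⟩) (fun α _ => by simp [eIdx]) (fun γ _ => mem_univ _)
    (fun α _ => by simp)
    (fun γ hγ => Subtype.ext (tsub_add_cancel_of_le (eIdx_le_iff.2 (mem_filter.1 hγ).2)))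
    (fun α _ => by simp)
  simpa [γ.2] using sum_sub_eIdx_add_one (mem_filter.1 hγ).2

end MultiIndex

section Bernstein

variable {d : ℕ}

lemma prod_X_pow_eIdx (j : Fin (d + 1)) :
    ∏ i, (X i : MvPolynomial (Fin (d + 1)) ℚ) ^ eIdx d j i = X j := by
  simp [eIdx, pow_ite]

lemma bern_eIdx (j : Fin (d + 1)) : Bern d (eIdx d j) = X j := by
  rw [Bern, prod_X_pow_eIdx, eIdx_eq_single, Nat.multinomial_single, Nat.cast_one, C_1, one_mul]

lemma prod_X_pow_add_eIdx (α : Fin (d + 1) → ℕ) (j : Fin (d + 1)) :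
    ∏ i, (X i : MvPolynomial (Fin (d + 1)) ℚ) ^ (α + eIdx d j) i = (∏ i, X i ^ α i) * X j := by
  simp only [Pi.add_apply, pow_add, prod_mul_distrib, prod_X_pow_eIdx]

lemma bern_mul_X (α : Fin (d + 1) → ℕ) (j : Fin (d + 1)) :
    Bern d α * X j =
      (((α j : ℚ) + 1) / ((∑ i, α i : ℕ) + 1)) • Bern d (α + eIdx d j) := by
  have hmult : ((α j : ℚ) + 1) * Nat.multinomial univ (α + eIdx d j) =
      ((∑ i, α i : ℕ) + 1) * Nat.multinomial univ α := by
    rw [eIdx_eq_single]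
    exact_mod_cast Nat.succ_mul_multinomial_add_single (mem_univ j) α
  rw [Bern, Bern, prod_X_pow_add_eIdx, smul_eq_C_mul, ← mul_assoc, ← C_mul, div_mul_eq_mul_div,
    hmult, mul_div_cancel_left₀ _ (by positivity), mul_assoc]

end Bernstein

theorem bernstein_mul_linear_coeffs_general (d N : ℕ)
    (a : (Fin (d + 1) → ℕ) → ℚ) (b : Fin (d + 1) → ℚ) :
    (∑ α : MIdx d N, a α.1 • Bern d α.1) * (∑ j, b j • Bern d (eIdx d j)) =
      ∑ γ : MIdx d (N + 1),
        (∑ j, if 1 ≤ γ.1 j then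
            a (γ.1 - eIdx d j) * b j * (γ.1 j : ℚ) / ((N : ℚ) + 1)
          else 0) • Bern d γ.1 := by
  simp_rw [sum_mul_sum, sum_smul]
  rw [sum_comm, sum_comm (s := univ (α := MIdx d (N + 1)))]
  refine sum_congr rfl fun j _ => ?_
  calc ∑ α : MIdx d N, (a α.1 • Bern d α.1) * (b j • Bern d (eIdx d j))
      = ∑ α : MIdx d N,
          (a α.1 * b j * ((α.1 j : ℚ) + 1) / ((N : ℚ) + 1)) • Bern d (α.1 + eIdx d j) :=
        sum_congr rfl fun α _ => by
          rw [smul_mul_smul_comm, bern_eIdx, bern_mul_X, α.2, smul_smul]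
          congr 1
          ring
    _ = _ := (sum_mIdx_succ_ite_sub_eIdx j fun α =>
          (a α * b j * ((α j : ℚ) + 1) / ((N : ℚ) + 1)) • Bern d (α + eIdx d j)).symm
    _ = _ := sum_congr rfl fun γ _ => by
          split_ifs with h
          · have hj : (γ.1 - eIdx d j) j + 1 = γ.1 j := by simp [eIdx]; omega
            rw [tsub_add_cancel_of_le (eIdx_le_iff.2 h), ← hj, Nat.cast_succ]
          · rw [zero_smul]

/-- If `f = ∑_{|α|=N} a_α B^N_α` and `g = ∑_{j} b_j B^1_{e_j}`, then
`f ⬝ g = ∑_{|γ|=N+1} c_γ B^{N+1}_γ` with `c_γ = ∑_{j : γ_j ≥ 1} a_{γ-e_j} b_j γ_j / (N+1)`. -/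
theorem bernstein_mul_linear_coeffs (d N : ℕ) (hd : 1 ≤ d)
    (a : (Fin (d + 1) → ℕ) → ℚ) (b : Fin (d + 1) → ℚ) :
    (∑ α : MIdx d N, a α.1 • Bern d α.1) * (∑ j, b j • Bern d (eIdx d j)) =
      ∑ γ : MIdx d (N + 1),
        (∑ j, if 1 ≤ γ.1 j then
            a (γ.1 - eIdx d j) * b j * (γ.1 j : ℚ) / ((N : ℚ) + 1)
          else 0) • Bern d γ.1 :=
  bernstein_mul_linear_coeffs_general d N a b
end

section
/- Let d ≥ 1, 0 ≤ i ≤ N, and let β be a multi-index of order N−i. Then, as multivariate polynomials over ℚ, B^{N−i}_β · (λ_0 + ⋯ + λ_d)^i = ∑_{|α|=N, β ≤ α componentwise} (C^{N−i}_β · C^{i}_{α−β} / C^N_α) · B^N_α. In particular, for every λ ∈ ℚ^{d+1} with ∑_j λ_j = 1, B^{N−i}_β(λ) = ∑_{|α|=N} (E^N_{N−i})_{αβ} B^N_α(λ), where (E^N_{N−i})_{αβ} = C^{N−i}_β · C^{i}_{α−β}/C^N_α if β ≤ α and 0 otherwise. -/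
/-- The entry `(E^N_{N-i})_{αβ} = C^{N-i}_β C^i_{α-β} / C^N_α` (for `β ≤ α`, else `0`)
of the degree elevation matrix, over `ℚ`. -/
noncomputable def elevEntry (d : ℕ) (α β : Fin (d + 1) → ℕ) : ℚ :=
  if ∀ k, β k ≤ α k then
    ((Nat.multinomial Finset.univ β * Nat.multinomial Finset.univ (α - β) : ℕ) : ℚ) /
      (Nat.multinomial Finset.univ α : ℚ)
  else 0

/-!
Expanding `(λ_0 + ⋯ + λ_d)^i` by the multinomial theorem writes it as `∑_{|γ| = i} B^i_γ`, and
`B^{N-i}_β B^i_γ = (C^{N-i}_β C^i_γ / C^N_{β+γ}) B^N_{β+γ}`. The shift `γ ↦ β + γ` is a bijection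
from multi-indices of order `i` onto those of order `N` dominating `β`, and `E^N_{N-i}` vanishes on
the others. Evaluating at a point with `∑ λ_j = 1` kills the factor `(∑ λ_j)^i`.
-/

open MvPolynomial Finset

theorem Finset.sum_piAntidiag_univ_add_left {ι M : Type*} [Fintype ι] [DecidableEq ι]
    [AddCommMonoid M] (β : ι → ℕ) [DecidablePred (β ≤ ·)] (n : ℕ) (f : (ι → ℕ) → M) :
    ∑ γ ∈ piAntidiag univ n, f (β + γ) =
      ∑ α ∈ piAntidiag univ (∑ k, β k + n) with β ≤ α, f α := by
  refine sum_nbij' (β + ·) (· - β) ?_ ?_ ?_ ?_ fun _ _ => rfl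
  · intro γ hγ
    simp_all [sum_add_distrib]
  · intro α hα
    simp only [mem_piAntidiag, mem_filter] at hα ⊢
    refine ⟨?_, fun _ _ => mem_univ _⟩
    rw [Pi.sub_def, sum_tsub_distrib univ fun k _ => hα.2 k, hα.1.1, Nat.add_sub_cancel_left]
  · intro γ _
    exact add_tsub_cancel_left β γ
  · intro α hα
    exact add_tsub_cancel_of_le (mem_filter.1 hα).2

section Bernstein

variable {d : ℕ}

theorem sum_MIdx_eq_sum_piAntidiag {M : Type*} [AddCommMonoid M] (N : ℕ)
    (f : (Fin (d + 1) → ℕ) → M) :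
    ∑ α : MIdx d N, f α.1 = ∑ α ∈ piAntidiag univ N, f α := by
  rw [piAntidiag_univ_fin_eq_antidiagonalTuple]
  exact (sum_subtype _ (fun _ => Nat.mem_antidiagonalTuple) f).symm

theorem sum_X_pow_eq_sum_Bern (i : ℕ) :
    (∑ k, X k : MvPolynomial (Fin (d + 1)) ℚ) ^ i = ∑ γ ∈ piAntidiag univ i, Bern d γ := by
  simp only [sum_pow_eq_sum_piAntidiag, Bern, map_natCast]

theorem elevEntry_eq_zero_of_not_le {α β : Fin (d + 1) → ℕ} (h : ¬β ≤ α) :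
    elevEntry d α β = 0 :=
  if_neg h

theorem Bern_mul_Bern (β γ : Fin (d + 1) → ℕ) :
    Bern d β * Bern d γ = elevEntry d (β + γ) β • Bern d (β + γ) := by
  have hne : (Nat.multinomial univ (β + γ) : ℚ) ≠ 0 := by
    exact_mod_cast (Nat.multinomial_pos _ _).ne'
  have hle : ∀ k, β k ≤ (β + γ) k := fun _ => le_self_add
  rw [elevEntry, if_pos hle, add_tsub_cancel_left, Bern, Bern, Bern, mul_mul_mul_comm, ← C_mul,
    ← prod_mul_distrib, smul_eq_C_mul, ← mul_assoc, ← C_mul, div_mul_cancel₀ _ hne]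
  simp only [Pi.add_apply, pow_add, Nat.cast_mul]

end Bernstein

theorem bernstein_elevation_general (d N i : ℕ) (hi : i ≤ N)
    (β : Fin (d + 1) → ℕ) (hβ : ∑ j, β j = N - i) :
    (Bern d β * (∑ k, MvPolynomial.X k) ^ i =
        ∑ α : MIdx d N, elevEntry d α.1 β • Bern d α.1) ∧
      ∀ lam : Fin (d + 1) → ℚ, ∑ k, lam k = 1 →
        MvPolynomial.eval lam (Bern d β) =
          ∑ α : MIdx d N, elevEntry d α.1 β * MvPolynomial.eval lam (Bern d α.1) := by
  classical
  obtain rfl : N = ∑ k, β k + i := by omega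
  have hpoly : Bern d β * (∑ k, X k) ^ i =
      ∑ α : MIdx d (∑ k, β k + i), elevEntry d α.1 β • Bern d α.1 :=
    calc Bern d β * (∑ k, X k) ^ i
        = ∑ γ ∈ piAntidiag univ i, Bern d β * Bern d γ := by
          rw [sum_X_pow_eq_sum_Bern, mul_sum]
      _ = ∑ α ∈ piAntidiag univ (∑ k, β k + i) with β ≤ α, elevEntry d α β • Bern d α := by
          simp only [Bern_mul_Bern]
          exact sum_piAntidiag_univ_add_left β i fun α => elevEntry d α β • Bern d α
      _ = ∑ α ∈ piAntidiag univ (∑ k, β k + i), elevEntry d α β • Bern d α := by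
          refine sum_filter_of_ne fun α _ h => ?_
          contrapose! h
          rw [elevEntry_eq_zero_of_not_le h, zero_smul]
      _ = _ := (sum_MIdx_eq_sum_piAntidiag _ _).symm
  refine ⟨hpoly, fun lam hlam => ?_⟩
  simpa [hlam, smul_eval] using congrArg (eval lam) hpoly

/-- For `0 ≤ i ≤ N` and a multi-index `β` of order `N - i`,
`B^{N-i}_β ⬝ (λ_0 + ⋯ + λ_d)^i = ∑_{|α|=N} (E^N_{N-i})_{αβ} B^N_α` as polynomials;
in particular, for every `λ` with `∑ λ_j = 1`,
`B^{N-i}_β(λ) = ∑_{|α|=N} (E^N_{N-i})_{αβ} B^N_α(λ)`. -/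
theorem bernstein_elevation (d N i : ℕ) (hd : 1 ≤ d) (hi : i ≤ N)
    (β : Fin (d + 1) → ℕ) (hβ : ∑ j, β j = N - i) :
    (Bern d β * (∑ k, MvPolynomial.X k) ^ i =
        ∑ α : MIdx d N, elevEntry d α.1 β • Bern d α.1) ∧
      ∀ lam : Fin (d + 1) → ℚ, ∑ k, lam k = 1 →
        MvPolynomial.eval lam (Bern d β) =
          ∑ α : MIdx d N, elevEntry d α.1 β * MvPolynomial.eval lam (Bern d α.1) :=
  bernstein_elevation_general d N i hi β hβ
end

section
/- Let d ≥ 1, N ≥ 0, and let c_0, c_1, …, c_N be arbitrary real numbers. Define a sequence of square real matrices A_0, A_1, …, A_N, where A_m is indexed by multi-indices of order m, by the recursion A_0 = c_N · I and A_{m+1} = c_{N−m−1} · I + E^{m+1}_{m} · A_m · (E^{m+1}_{m})^T for 0 ≤ m ≤ N−1. Then this telescoping form satisfies A_N = ∑_{j=0}^{N} c_j · E^N_{N−j} · (E^N_{N−j})^T. -/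
open Matrix

/-- The degree elevation matrix `E^n_m` (from degree `m` to degree `n`, `m ≤ n`), with
entries `(E^n_m)_{αβ} = C^m_β ⬝ C^{n-m}_{α-β} / C^n_α` when `β ≤ α` componentwise,
and `0` otherwise.  In particular `E^{m+1}_m` is the one-degree elevation matrix with
nonzero entries exactly `(E^{m+1}_m)_{β+e_j, β} = (β_j + 1)/(m+1)`. -/
noncomputable def elev (d n m : ℕ) : Matrix (MIdx d n) (MIdx d m) ℝ :=
  Matrix.of fun α β =>
    if ∀ i, β.1 i ≤ α.1 i then
      ((Nat.multinomial Finset.univ β.1 * Nat.multinomial Finset.univ (α.1 - β.1) : ℕ) : ℝ) /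
        (Nat.multinomial Finset.univ α.1 : ℝ)
    else 0

/-! Written as `(E^n_m)_{αβ} = ∏ᵢ C(αᵢ, βᵢ) / C(n, m)`, the one-step elevation `E^{m+1}_m`
only sees the rows `α = β + e_j`, with weight `αⱼ / (m + 1)`. Summing the identity
`αⱼ C(αⱼ - 1, γⱼ) = (αⱼ - γⱼ) C(αⱼ, γⱼ)` over `j` gives `E^{m+1}_m E^m_k = E^{m+1}_k`.
Hence conjugating `A_m = ∑_{k ≤ m} c_{N-k} E^m_k (E^m_k)ᵀ` by `E^{m+1}_m` and adding
`c_{N-m-1} I = c_{N-m-1} E^{m+1}_{m+1} (E^{m+1}_{m+1})ᵀ` gives the same formula for `A_{m+1}`. -/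

open Finset Nat

section TupleLemmas

variable {ι : Type*} [Fintype ι]

lemma eq_of_le_of_sum_eq {f g : ι → ℕ} (hle : f ≤ g) (hsum : ∑ i, f i = ∑ i, g i) : f = g :=
  funext fun i => (sum_eq_sum_iff_of_le fun i _ => hle i).mp hsum i (mem_univ i)

lemma sum_sub_single_one [DecidableEq ι] {α : ι → ℕ} {j : ι} (hj : α j ≠ 0) :
    ∑ i, (α - Pi.single j 1 : ι → ℕ) i + 1 = ∑ i, α i := by
  have hα : α = (α - Pi.single j 1) + Pi.single j 1 := by
    ext i
    by_cases hi : i = j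
    · subst hi
      simp only [Pi.add_apply, Pi.sub_apply, Pi.single_eq_same]
      omega
    · simp [hi]
  conv_rhs => rw [hα]
  simp [sum_add_distrib]

lemma prod_choose_sub_single_one [DecidableEq ι] {α : ι → ℕ} {j : ι} (hj : α j ≠ 0) :
    ∏ i, (α i).choose ((α - Pi.single j 1 : ι → ℕ) i) = α j := by
  rw [Fintype.prod_eq_single j fun i hi => by simp [hi], Pi.sub_apply, Pi.single_eq_same]
  obtain ⟨a, ha⟩ := Nat.exists_eq_succ_of_ne_zero hj
  rw [ha, Nat.succ_sub_one, Nat.choose_succ_self_right]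

lemma prod_choose_ne_zero_iff {α β : ι → ℕ} : ∏ i, (α i).choose (β i) ≠ 0 ↔ β ≤ α := by
  simp [prod_ne_zero_iff, choose_ne_zero_iff, Pi.le_def]

lemma exists_eq_sub_single_one_of_prod_choose_ne_zero [DecidableEq ι] {α β : ι → ℕ}
    (hne : ∏ i, (α i).choose (β i) ≠ 0) (hsum : ∑ i, β i + 1 = ∑ i, α i) :
    ∃ j, α j ≠ 0 ∧ β = α - Pi.single j 1 := by
  have hle : β ≤ α := prod_choose_ne_zero_iff.mp hne
  obtain ⟨j, hj⟩ : ∃ j, β j < α j := by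
    by_contra! h
    have := sum_le_sum fun i (_ : i ∈ univ) => h i
    omega
  refine ⟨j, by omega, eq_of_le_of_sum_eq (fun i => ?_) ?_⟩
  · by_cases hi : i = j
    · subst hi
      simp only [Pi.sub_apply, Pi.single_eq_same]
      omega
    · simpa [hi] using hle i
  · have := sum_sub_single_one (α := α) (j := j) (by omega)
    omega

lemma mul_prod_choose_sub_single_one [DecidableEq ι] (α γ : ι → ℕ) (j : ι) :
    α j * ∏ i, ((α - Pi.single j 1 : ι → ℕ) i).choose (γ i) =
      (α j - γ j) * ∏ i, (α i).choose (γ i) := by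
  rw [Fintype.prod_eq_mul_prod_compl j,
    Fintype.prod_eq_mul_prod_compl j (fun i => (α i).choose (γ i)), ← mul_assoc, ← mul_assoc]
  congr 1
  · rw [Pi.sub_apply, Pi.single_eq_same]
    cases α j with
    | zero => simp
    | succ a => rw [Nat.add_sub_cancel, mul_comm, Nat.choose_mul_succ_eq, mul_comm]
  · refine prod_congr rfl fun i hi => ?_
    rw [Pi.sub_apply, Pi.single_eq_of_ne (by simpa using hi), Nat.sub_zero]

lemma sum_mul_prod_choose_sub_single_one [DecidableEq ι] (α γ : ι → ℕ) :
    ∑ j, α j * ∏ i, ((α - Pi.single j 1 : ι → ℕ) i).choose (γ i) =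
      (∑ i, α i - ∑ i, γ i) * ∏ i, (α i).choose (γ i) := by
  simp_rw [mul_prod_choose_sub_single_one, ← sum_mul]
  by_cases hle : ∀ i, γ i ≤ α i
  · rw [sum_tsub_distrib _ fun i _ => hle i]
  · push Not at hle
    obtain ⟨i, hi⟩ := hle
    rw [prod_eq_zero (mem_univ i) (Nat.choose_eq_zero_iff.mpr hi), mul_zero, mul_zero]

lemma multinomial_mul_multinomial_mul_choose {α β : ι → ℕ} (h : β ≤ α) :
    multinomial univ β * multinomial univ (α - β) * (∑ i, α i).choose (∑ i, β i) =
      (∏ i, (α i).choose (β i)) * multinomial univ α := by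
  have hsum : ∑ i, (α - β) i = ∑ i, α i - ∑ i, β i := sum_tsub_distrib _ fun i _ => h i
  have hle : ∑ i, β i ≤ ∑ i, α i := sum_le_sum fun i _ => h i
  refine Nat.eq_of_mul_eq_mul_left (by positivity : 0 < (∏ i, (β i)!) * ∏ i, ((α - β) i)!) ?_
  calc (∏ i, (β i)!) * (∏ i, ((α - β) i)!) *
        (multinomial univ β * multinomial univ (α - β) * (∑ i, α i).choose (∑ i, β i))
      = ((∏ i, (β i)!) * multinomial univ β) *
          ((∏ i, ((α - β) i)!) * multinomial univ (α - β)) * (∑ i, α i).choose (∑ i, β i) := by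
        ring
    _ = (∑ i, α i)! := by
      rw [multinomial_spec, multinomial_spec, hsum, mul_comm, ← mul_assoc,
        choose_mul_factorial_mul_factorial hle]
    _ = (∏ i, (α i).choose (β i) * ((β i)! * ((α - β) i)!)) * multinomial univ α := by
      rw [← multinomial_spec]
      congr 1
      exact prod_congr rfl fun i _ => by
        rw [← mul_assoc, Pi.sub_apply, choose_mul_factorial_mul_factorial (h i)]
    _ = _ := by rw [prod_mul_distrib, prod_mul_distrib]; ring

end TupleLemmas

lemma elev_apply (d n m : ℕ) (α : MIdx d n) (β : MIdx d m) :
    elev d n m α β = ((∏ i, (α.1 i).choose (β.1 i) : ℕ) : ℝ) / n.choose m := by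
  by_cases h : ∀ i, β.1 i ≤ α.1 i
  · have hmn : m ≤ n := α.2 ▸ β.2 ▸ sum_le_sum fun i _ => h i
    have key := multinomial_mul_multinomial_mul_choose (α := α.1) (β := β.1) h
    rw [α.2, β.2] at key
    rw [elev, of_apply, if_pos h, div_eq_div_iff (cast_ne_zero.mpr (multinomial_pos _ _).ne')
      (cast_ne_zero.mpr (choose_pos hmn).ne')]
    exact_mod_cast key
  · push Not at h
    obtain ⟨i, hi⟩ := h
    rw [elev, of_apply, if_neg (by simpa using ⟨i, hi⟩),
      prod_eq_zero (mem_univ i) (choose_eq_zero_iff.mpr hi), cast_zero, zero_div]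

lemma elev_self (d n : ℕ) : elev d n n = 1 := by
  ext α β
  rw [elev_apply, choose_self, cast_one, div_one, one_apply]
  split_ifs with hαβ
  · subst hαβ
    simp [choose_self]
  · by_contra hne
    have hle : β.1 ≤ α.1 := prod_choose_ne_zero_iff.mp (by exact_mod_cast hne)
    exact hαβ (Subtype.ext (eq_of_le_of_sum_eq hle (by rw [α.2, β.2])).symm)

lemma sum_prod_choose_mul_eq_sum_sub_single_one {d m : ℕ} (α : MIdx d (m + 1))
    (G : (Fin (d + 1) → ℕ) → ℝ) :
    ∑ β : MIdx d m, ((∏ i, (α.1 i).choose (β.1 i) : ℕ) : ℝ) * G β.1 =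
      ∑ j, (α.1 j : ℝ) * G (α.1 - Pi.single j 1) := by
  have hα (j : Fin (d + 1)) (hj : (α.1 j : ℝ) * G (α.1 - Pi.single j 1) ≠ 0) : α.1 j ≠ 0 := by
    exact_mod_cast left_ne_zero_of_mul hj
  symm
  refine sum_bij_ne_zero (fun j _ hj => ⟨α.1 - Pi.single j 1, ?_⟩) (fun _ _ _ => mem_univ _)
    ?_ ?_ ?_
  · have := sum_sub_single_one (hα j hj)
    rw [α.2] at this
    omega
  · intro j₁ _ hj₁ j₂ _ _ heq
    have hα₁ := hα j₁ hj₁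
    by_contra hne
    have h₁ := congrFun (Subtype.mk.inj heq) j₁
    rw [Pi.sub_apply, Pi.sub_apply, Pi.single_eq_same, Pi.single_eq_of_ne hne] at h₁
    omega
  · intro β _ hβ
    obtain ⟨j, hj, hβj⟩ := exists_eq_sub_single_one_of_prod_choose_ne_zero
      (by exact_mod_cast left_ne_zero_of_mul hβ) (by rw [α.2, β.2])
    refine ⟨j, mem_univ j, ?_, Subtype.ext hβj.symm⟩
    rwa [hβj, prod_choose_sub_single_one hj] at hβ
  · intro j _ hj
    rw [prod_choose_sub_single_one (hα j hj)]

lemma elev_succ_mul_elev {d m k : ℕ} (hk : k ≤ m) :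
    elev d (m + 1) m * elev d m k = elev d (m + 1) k := by
  ext α γ
  have hmk : (m.choose k : ℝ) ≠ 0 := cast_ne_zero.mpr (choose_pos hk).ne'
  have hsub : ((m + 1 - k : ℕ) : ℝ) ≠ 0 := cast_ne_zero.mpr (by omega)
  calc (elev d (m + 1) m * elev d m k) α γ
      = (∑ β : MIdx d m, ((∏ i, (α.1 i).choose (β.1 i) : ℕ) : ℝ) *
          ((∏ i, (β.1 i).choose (γ.1 i) : ℕ) : ℝ)) / ((m + 1 : ℕ) * m.choose k) := by
        simp only [mul_apply, elev_apply, choose_succ_self_right, sum_div]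
        exact sum_congr rfl fun β _ => by field_simp
    _ = (∑ j, (α.1 j : ℝ) *
            ((∏ i, ((α.1 - Pi.single j 1 : Fin (d + 1) → ℕ) i).choose (γ.1 i) : ℕ) : ℝ)) /
          ((m + 1 : ℕ) * m.choose k) := by
        rw [sum_prod_choose_mul_eq_sum_sub_single_one α
          fun β => ((∏ i, (β i).choose (γ.1 i) : ℕ) : ℝ)]
    _ = ((m + 1 - k : ℕ) * ((∏ i, (α.1 i).choose (γ.1 i) : ℕ) : ℝ)) /
          ((m + 1 : ℕ) * m.choose k) := by
        have := sum_mul_prod_choose_sub_single_one α.1 γ.1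
        rw [α.2, γ.2] at this
        exact_mod_cast congrArg (fun x : ℕ => (x : ℝ) / ((m + 1 : ℕ) * m.choose k)) this
    _ = elev d (m + 1) k α γ := by
        have hchoose :
            ((m + 1 - k : ℕ) : ℝ) * (m + 1).choose k = (m + 1 : ℕ) * m.choose k := by
          exact_mod_cast by rw [mul_comm, mul_comm (m + 1), choose_mul_succ_eq]
        rw [elev_apply, ← hchoose, mul_div_mul_left _ _ hsub]

lemma eq_sum_smul_elev_mul_transpose {d N : ℕ} (b : ℕ → ℝ)
    (A : ∀ m : ℕ, Matrix (MIdx d m) (MIdx d m) ℝ) (h0 : A 0 = b 0 • 1)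
    (hstep : ∀ m : ℕ, m + 1 ≤ N →
      A (m + 1) = b (m + 1) • 1 + elev d (m + 1) m * A m * (elev d (m + 1) m)ᵀ) :
    ∀ m ≤ N, A m = ∑ k ∈ range (m + 1), b k • (elev d m k * (elev d m k)ᵀ) := by
  intro m hm
  induction m with
  | zero => simp [h0, elev_self]
  | succ m ih =>
    rw [hstep m hm, ih (by omega), sum_range_succ _ (m + 1), elev_self, transpose_one, mul_one,
      Matrix.mul_sum, Matrix.sum_mul, add_comm (b (m + 1) • 1)]
    congr 1
    refine sum_congr rfl fun k hk => ?_
    rw [Matrix.mul_smul, Matrix.smul_mul, ← elev_succ_mul_elev (mem_range_succ_iff.mp hk),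
      transpose_mul]
    simp only [Matrix.mul_assoc]

theorem telescoping_form_general (d N : ℕ) (c : ℕ → ℝ)
    (A : ∀ m : ℕ, Matrix (MIdx d m) (MIdx d m) ℝ)
    (hA0 : A 0 = c N • (1 : Matrix (MIdx d 0) (MIdx d 0) ℝ))
    (hAstep : ∀ m : ℕ, m + 1 ≤ N →
      A (m + 1) = c (N - (m + 1)) • (1 : Matrix (MIdx d (m + 1)) (MIdx d (m + 1)) ℝ) +
        elev d (m + 1) m * A m * (elev d (m + 1) m)ᵀ) :
    A N = ∑ j : Fin (N + 1), c (j : ℕ) •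
        (elev d N (N - (j : ℕ)) * (elev d N (N - (j : ℕ)))ᵀ) := by
  rw [eq_sum_smul_elev_mul_transpose (fun k => c (N - k)) A hA0 hAstep N le_rfl,
    Fin.sum_univ_eq_sum_range (fun j => c j • (elev d N (N - j) * (elev d N (N - j))ᵀ)),
    ← sum_range_reflect]
  refine sum_congr rfl fun j hj => ?_
  have hj : j ≤ N := mem_range_succ_iff.mp hj
  rw [add_tsub_cancel_right, Nat.sub_sub_self hj]

/-- Let `c_0, …, c_N` be arbitrary reals and define `A_0 = c_N • I`,
`A_{m+1} = c_{N-(m+1)} • I + E^{m+1}_m ⬝ A_m ⬝ (E^{m+1}_m)ᵀ` for `0 ≤ m ≤ N-1`.  Then this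
telescoping form satisfies `A_N = ∑_{j=0}^N c_j E^N_{N-j} (E^N_{N-j})ᵀ`. -/
theorem telescoping_form (d N : ℕ) (hd : 1 ≤ d) (c : ℕ → ℝ)
    (A : ∀ m : ℕ, Matrix (MIdx d m) (MIdx d m) ℝ)
    (hA0 : A 0 = c N • (1 : Matrix (MIdx d 0) (MIdx d 0) ℝ))
    (hAstep : ∀ m : ℕ, m + 1 ≤ N →
      A (m + 1) = c (N - (m + 1)) • (1 : Matrix (MIdx d (m + 1)) (MIdx d (m + 1)) ℝ) +
        elev d (m + 1) m * A m * (elev d (m + 1) m)ᵀ) :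
    A N = ∑ j : Fin (N + 1), c (j : ℕ) •
        (elev d N (N - (j : ℕ)) * (elev d N (N - (j : ℕ)))ᵀ) :=
  telescoping_form_general d N c A hA0 hAstep
end
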